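/- Let u, v, w ∈ ℝ^N, φ_{abc} = u_a·v_b·w_c, D = λ_d + λ_p·N·(α₁+α₂+α₃) + λ_t·N^{3/2}, and assume the solution condition λ₂ + (D/N³)·|u|²·|v|²·|w|² = 0. Then the Hessian of V at φ in the direction of the solution itself satisfies H(φ)(u⊗v⊗w) = −2λ₂·(u⊗v⊗w). -/

import Mathlib

open Finset

/-- The potential of the quartic `O(N)^3` tensor model. -/
noncomputable def potV (N : ℕ) (l2 ld lp lt a1 a2 a3 : ℝ)
    (φ : Fin N → Fin N → Fin N → ℝ) : ℝ :=
  l2 / 2 * (∑ a, ∑ b, ∑ c, (φ a b c) ^ 2)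
  + ld / (4 * (N : ℝ) ^ 3) * (∑ a, ∑ b, ∑ c, (φ a b c) ^ 2) ^ 2
  + lp / (4 * (N : ℝ) ^ 2) *
      (a1 * ∑ a, ∑ b, ∑ c, ∑ a', ∑ b', ∑ c',
          φ a b c * φ a b' c' * φ a' b' c' * φ a' b c
       + a2 * ∑ a, ∑ b, ∑ c, ∑ a', ∑ b', ∑ c',
          φ a b c * φ a' b c' * φ a' b' c' * φ a b' c
       + a3 * ∑ a, ∑ b, ∑ c, ∑ a', ∑ b', ∑ c',
          φ a b c * φ a' b' c * φ a' b' c' * φ a b c')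
  + lt / (4 * (N : ℝ) ^ ((3 : ℝ) / 2)) *
      ∑ a, ∑ b, ∑ c, ∑ a', ∑ b', ∑ c',
        φ a b c * φ a b' c' * φ a' b c' * φ a' b' c

/-- The field equations of the quartic `O(N)^3` tensor model (vanishing gradient of `potV`). -/
def FieldEqs (N : ℕ) (l2 ld lp lt a1 a2 a3 : ℝ)
    (φ : Fin N → Fin N → Fin N → ℝ) : Prop :=
  ∀ a b c,
    l2 * φ a b c
    + ld / (N : ℝ) ^ 3 * (∑ a', ∑ b', ∑ c', (φ a' b' c') ^ 2) * φ a b c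
    + lp / (N : ℝ) ^ 2 *
        (a1 * ∑ a', ∑ b', ∑ c', φ a b' c' * φ a' b' c' * φ a' b c
         + a2 * ∑ a', ∑ b', ∑ c', φ a' b c' * φ a' b' c' * φ a b' c
         + a3 * ∑ a', ∑ b', ∑ c', φ a' b' c * φ a' b' c' * φ a b c')
    + lt / (N : ℝ) ^ ((3 : ℝ) / 2) *
        ∑ a', ∑ b', ∑ c', φ a b' c' * φ a' b c' * φ a' b' c = 0

/-- The Hessian of `potV` at `φ` (the matrix of second partial derivatives
`H(φ)_{abc,a'b'c'} = ∂²V/∂φ_{abc}∂φ_{a'b'c'}`), acting on a tensor field `χ` by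
`(H(φ)χ)_{abc} = Σ_{a'b'c'} H(φ)_{abc,a'b'c'} χ_{a'b'c'}`. -/
noncomputable def hessApply (N : ℕ) (l2 ld lp lt a1 a2 a3 : ℝ)
    (φ χ : Fin N → Fin N → Fin N → ℝ) : Fin N → Fin N → Fin N → ℝ :=
  fun a b c =>
    deriv (fun s : ℝ =>
      deriv (fun t : ℝ =>
        potV N l2 ld lp lt a1 a2 a3
          (fun a' b' c' => φ a' b' c' + t * χ a' b' c'
            + s * (if a' = a ∧ b' = b ∧ c' = c then (1 : ℝ) else 0))) 0) 0

/-!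
The potential splits as `V = V₂ + V₄` with `V₂` homogeneous of degree 2 and `V₄` of degree 4.
For a basis tensor `e` and `P` homogeneous of degree `n`, Euler's identity `DP(z) z = n P(z)`
at `z = φ + s e` gives `∂ₜ P(φ + s e + t φ)|₀ = n P(φ + s e) - s DP(φ + s e) e`, whose
`s`-derivative at `0` is `(n - 1) DP(φ) e`; hence `H(φ)φ = ∇V₂(φ) + 3 ∇V₄(φ)`. At a rank-one
`φ = u ⊗ v ⊗ w` each of the five quartic invariants has gradient `4 ‖φ‖² φ`, so
`∇V₄(φ) = (D / N³) ‖φ‖² φ = -λ₂ φ` by the solution condition, while `∇V₂(φ) = λ₂ φ`.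
Thus `H(φ)φ = λ₂ φ - 3 λ₂ φ = -2 λ₂ φ`.
-/

section Homogeneous

variable {E : Type*} [NormedAddCommGroup E] [NormedSpace ℝ E] {P : E → ℝ} {n : ℕ}

theorem hasLineDerivAt_self_of_homogeneous (hP : ∀ (c : ℝ) x, P (c • x) = c ^ n * P x) (x : E) :
    HasLineDerivAt ℝ P (n * P x) x x := by
  have hline : (fun t : ℝ => P (x + t • x)) = fun t => (1 + t) ^ n * P x :=
    funext fun t => by rw [← hP, add_smul, one_smul]
  unfold HasLineDerivAt
  rw [hline]
  simpa only [id_eq, Pi.pow_apply, add_zero, one_pow, mul_one] using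
    (((hasDerivAt_id (0 : ℝ)).const_add 1).pow n).mul_const (P x)

theorem hasLineDerivAt_lineDeriv_of_homogeneous (hP : ∀ (c : ℝ) x, P (c • x) = c ^ n * P x)
    (hd : ContDiff ℝ 2 P) (x y : E) :
    HasLineDerivAt ℝ (fun z => lineDeriv ℝ P z x) ((n - 1) * lineDeriv ℝ P x y) x y := by
  have hdiff : Differentiable ℝ P := hd.differentiable (by norm_num)
  have euler (s : ℝ) : lineDeriv ℝ P (x + s • y) x
      = n * P (x + s • y) - s * fderiv ℝ P (x + s • y) y := by
    set z := x + s • y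
    have hx : x = z - s • y := (add_sub_cancel_right x (s • y)).symm
    rw [(hdiff z).lineDeriv_eq_fderiv, hx, map_sub, map_smul, smul_eq_mul,
      ← (hdiff z).lineDeriv_eq_fderiv, (hasLineDerivAt_self_of_homogeneous hP z).lineDeriv]
  have hline : Differentiable ℝ fun s : ℝ => x + s • y := by fun_prop
  have hg : DifferentiableAt ℝ (fun s : ℝ => fderiv ℝ P (x + s • y) y) 0 :=
    ((((hd.fderiv_right (m := 1) le_rfl).differentiable one_ne_zero).comp hline) 0).clm_apply
      (differentiableAt_const y)
  have hP' : HasDerivAt (fun s : ℝ => P (x + s • y)) (lineDeriv ℝ P x y) 0 :=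
    (hdiff x).lineDifferentiableAt.hasLineDerivAt
  show HasDerivAt (fun s : ℝ => lineDeriv ℝ P (x + s • y) x) _ 0
  rw [funext euler]
  refine ((hP'.const_mul (n : ℝ)).fun_sub
    ((hasDerivAt_id' (0 : ℝ)).fun_mul hg.hasDerivAt)).congr_deriv ?_
  simp only [(hdiff x).lineDeriv_eq_fderiv, zero_smul, add_zero, one_mul, zero_mul]
  ring

end Homogeneous

section Tensor

variable {ι κ μ : Type*} [Fintype ι] [Fintype κ] [Fintype μ]

def tensor3 (x : ι → ℝ) (y : κ → ℝ) (z : μ → ℝ) : ι → κ → μ → ℝ :=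
  fun a b c => x a * y b * z c

def sumSq (ψ : ι → κ → μ → ℝ) : ℝ := ∑ a, ∑ b, ∑ c, ψ a b c ^ 2

def pillow₁ (ψ₁ ψ₂ ψ₃ ψ₄ : ι → κ → μ → ℝ) : ℝ :=
  ∑ a, ∑ b, ∑ c, ∑ a', ∑ b', ∑ c', ψ₁ a b c * ψ₂ a b' c' * ψ₃ a' b' c' * ψ₄ a' b c

def pillow₂ (ψ₁ ψ₂ ψ₃ ψ₄ : ι → κ → μ → ℝ) : ℝ :=
  ∑ a, ∑ b, ∑ c, ∑ a', ∑ b', ∑ c', ψ₁ a b c * ψ₂ a' b c' * ψ₃ a' b' c' * ψ₄ a b' c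

def pillow₃ (ψ₁ ψ₂ ψ₃ ψ₄ : ι → κ → μ → ℝ) : ℝ :=
  ∑ a, ∑ b, ∑ c, ∑ a', ∑ b', ∑ c', ψ₁ a b c * ψ₂ a' b' c * ψ₃ a' b' c' * ψ₄ a b c'

def tetrahedron (ψ₁ ψ₂ ψ₃ ψ₄ : ι → κ → μ → ℝ) : ℝ :=
  ∑ a, ∑ b, ∑ c, ∑ a', ∑ b', ∑ c', ψ₁ a b c * ψ₂ a b' c' * ψ₃ a' b c' * ψ₄ a' b' c

-- Factors are listed from the innermost summation index outwards, the order in which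
-- `simp only [sum_mul, mul_sum]` expands the product back into the nested sum.
theorem sum_tensor3_mul_tensor3 (x x' : ι → ℝ) (y y' : κ → ℝ) (z z' : μ → ℝ) :
    ∑ a, ∑ b, ∑ c, tensor3 x y z a b c * tensor3 x' y' z' a b c
      = (z ⬝ᵥ z') * (y ⬝ᵥ y') * (x ⬝ᵥ x') := by
  simp only [tensor3, dotProduct, sum_mul, mul_sum]
  ac_rfl

theorem sumSq_tensor3 (x : ι → ℝ) (y : κ → ℝ) (z : μ → ℝ) :
    sumSq (tensor3 x y z) = (z ⬝ᵥ z) * (y ⬝ᵥ y) * (x ⬝ᵥ x) := by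
  simp only [sumSq, sq, sum_tensor3_mul_tensor3]

theorem pillow₁_tensor3 (x₁ x₂ x₃ x₄ : ι → ℝ) (y₁ y₂ y₃ y₄ : κ → ℝ) (z₁ z₂ z₃ z₄ : μ → ℝ) :
    pillow₁ (tensor3 x₁ y₁ z₁) (tensor3 x₂ y₂ z₂) (tensor3 x₃ y₃ z₃) (tensor3 x₄ y₄ z₄)
      = (z₂ ⬝ᵥ z₃) * (y₂ ⬝ᵥ y₃) * (x₃ ⬝ᵥ x₄) * (z₁ ⬝ᵥ z₄) * (y₁ ⬝ᵥ y₄) * (x₁ ⬝ᵥ x₂) := by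
  simp only [pillow₁, tensor3, dotProduct, sum_mul, mul_sum]
  ac_rfl

theorem pillow₂_tensor3 (x₁ x₂ x₃ x₄ : ι → ℝ) (y₁ y₂ y₃ y₄ : κ → ℝ) (z₁ z₂ z₃ z₄ : μ → ℝ) :
    pillow₂ (tensor3 x₁ y₁ z₁) (tensor3 x₂ y₂ z₂) (tensor3 x₃ y₃ z₃) (tensor3 x₄ y₄ z₄)
      = (z₂ ⬝ᵥ z₃) * (y₃ ⬝ᵥ y₄) * (x₂ ⬝ᵥ x₃) * (z₁ ⬝ᵥ z₄) * (y₁ ⬝ᵥ y₂) * (x₁ ⬝ᵥ x₄) := by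
  simp only [pillow₂, tensor3, dotProduct, sum_mul, mul_sum]
  ac_rfl

theorem pillow₃_tensor3 (x₁ x₂ x₃ x₄ : ι → ℝ) (y₁ y₂ y₃ y₄ : κ → ℝ) (z₁ z₂ z₃ z₄ : μ → ℝ) :
    pillow₃ (tensor3 x₁ y₁ z₁) (tensor3 x₂ y₂ z₂) (tensor3 x₃ y₃ z₃) (tensor3 x₄ y₄ z₄)
      = (z₃ ⬝ᵥ z₄) * (y₂ ⬝ᵥ y₃) * (x₂ ⬝ᵥ x₃) * (z₁ ⬝ᵥ z₂) * (y₁ ⬝ᵥ y₄) * (x₁ ⬝ᵥ x₄) := by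
  simp only [pillow₃, tensor3, dotProduct, sum_mul, mul_sum]
  ac_rfl

theorem tetrahedron_tensor3 (x₁ x₂ x₃ x₄ : ι → ℝ) (y₁ y₂ y₃ y₄ : κ → ℝ) (z₁ z₂ z₃ z₄ : μ → ℝ) :
    tetrahedron (tensor3 x₁ y₁ z₁) (tensor3 x₂ y₂ z₂) (tensor3 x₃ y₃ z₃) (tensor3 x₄ y₄ z₄)
      = (z₂ ⬝ᵥ z₃) * (y₂ ⬝ᵥ y₄) * (x₃ ⬝ᵥ x₄) * (z₁ ⬝ᵥ z₄) * (y₁ ⬝ᵥ y₃) * (x₁ ⬝ᵥ x₂) := by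
  simp only [tetrahedron, tensor3, dotProduct, sum_mul, mul_sum]
  ac_rfl

theorem hasDerivAt_mul₄ (x₁ x₂ x₃ x₄ y₁ y₂ y₃ y₄ : ℝ) :
    HasDerivAt (fun r : ℝ => (x₁ + r * y₁) * (x₂ + r * y₂) * (x₃ + r * y₃) * (x₄ + r * y₄))
      (y₁ * x₂ * x₃ * x₄ + x₁ * y₂ * x₃ * x₄ + x₁ * x₂ * y₃ * x₄ + x₁ * x₂ * x₃ * y₄) 0 := by
  have h (x y : ℝ) : HasDerivAt (fun r : ℝ => x + r * y) y 0 :=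
    (((hasDerivAt_id' (0 : ℝ)).mul_const y).const_add x).congr_deriv (one_mul y)
  exact ((((h x₁ y₁).fun_mul (h x₂ y₂)).fun_mul (h x₃ y₃)).fun_mul (h x₄ y₄)).congr_deriv
    (by ring)

theorem hasDerivAt_sum₆ {F : ι → κ → μ → ι → κ → μ → ℝ → ℝ} {F' : ι → κ → μ → ι → κ → μ → ℝ}
    {r : ℝ} (h : ∀ a b c a' b' c', HasDerivAt (F a b c a' b' c') (F' a b c a' b' c') r) :
    HasDerivAt (fun r => ∑ a, ∑ b, ∑ c, ∑ a', ∑ b', ∑ c', F a b c a' b' c' r)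
      (∑ a, ∑ b, ∑ c, ∑ a', ∑ b', ∑ c', F' a b c a' b' c') r :=
  .fun_sum fun a _ => .fun_sum fun b _ => .fun_sum fun c _ =>
    .fun_sum fun a' _ => .fun_sum fun b' _ => .fun_sum fun c' _ => h a b c a' b' c'

theorem hasLineDerivAt_pillow₁ (x y : ι → κ → μ → ℝ) :
    HasLineDerivAt ℝ (fun ψ => pillow₁ ψ ψ ψ ψ)
      (pillow₁ y x x x + pillow₁ x y x x + pillow₁ x x y x + pillow₁ x x x y) x y := by
  simpa only [HasLineDerivAt, pillow₁, Pi.add_apply, Pi.smul_apply, smul_eq_mul,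
    ← sum_add_distrib] using hasDerivAt_sum₆ fun a b c a' b' c' =>
    hasDerivAt_mul₄ (x a b c) (x a b' c') (x a' b' c') (x a' b c)
      (y a b c) (y a b' c') (y a' b' c') (y a' b c)

theorem hasLineDerivAt_pillow₂ (x y : ι → κ → μ → ℝ) :
    HasLineDerivAt ℝ (fun ψ => pillow₂ ψ ψ ψ ψ)
      (pillow₂ y x x x + pillow₂ x y x x + pillow₂ x x y x + pillow₂ x x x y) x y := by
  simpa only [HasLineDerivAt, pillow₂, Pi.add_apply, Pi.smul_apply, smul_eq_mul,
    ← sum_add_distrib] using hasDerivAt_sum₆ fun a b c a' b' c' =>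
    hasDerivAt_mul₄ (x a b c) (x a' b c') (x a' b' c') (x a b' c)
      (y a b c) (y a' b c') (y a' b' c') (y a b' c)

theorem hasLineDerivAt_pillow₃ (x y : ι → κ → μ → ℝ) :
    HasLineDerivAt ℝ (fun ψ => pillow₃ ψ ψ ψ ψ)
      (pillow₃ y x x x + pillow₃ x y x x + pillow₃ x x y x + pillow₃ x x x y) x y := by
  simpa only [HasLineDerivAt, pillow₃, Pi.add_apply, Pi.smul_apply, smul_eq_mul,
    ← sum_add_distrib] using hasDerivAt_sum₆ fun a b c a' b' c' =>
    hasDerivAt_mul₄ (x a b c) (x a' b' c) (x a' b' c') (x a b c')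
      (y a b c) (y a' b' c) (y a' b' c') (y a b c')

theorem hasLineDerivAt_tetrahedron (x y : ι → κ → μ → ℝ) :
    HasLineDerivAt ℝ (fun ψ => tetrahedron ψ ψ ψ ψ)
      (tetrahedron y x x x + tetrahedron x y x x + tetrahedron x x y x + tetrahedron x x x y)
      x y := by
  simpa only [HasLineDerivAt, tetrahedron, Pi.add_apply, Pi.smul_apply, smul_eq_mul,
    ← sum_add_distrib] using hasDerivAt_sum₆ fun a b c a' b' c' =>
    hasDerivAt_mul₄ (x a b c) (x a b' c') (x a' b c') (x a' b' c)
      (y a b c) (y a b' c') (y a' b c') (y a' b' c)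

theorem hasLineDerivAt_sumSq (x y : ι → κ → μ → ℝ) :
    HasLineDerivAt ℝ sumSq (2 * ∑ a, ∑ b, ∑ c, x a b c * y a b c) x y := by
  have h (α β : ℝ) : HasDerivAt (fun r : ℝ => (α + r * β) ^ 2) (2 * (α * β)) 0 :=
    ((((hasDerivAt_id' (0 : ℝ)).mul_const β).const_add α).fun_pow 2).congr_deriv (by ring)
  simpa only [HasLineDerivAt, sumSq, Pi.add_apply, Pi.smul_apply, smul_eq_mul, mul_sum] using
    HasDerivAt.fun_sum fun a _ => HasDerivAt.fun_sum fun b _ => HasDerivAt.fun_sum fun c _ =>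
      h (x a b c) (y a b c)

theorem sumSq_smul (r : ℝ) (ψ : ι → κ → μ → ℝ) : sumSq (r • ψ) = r ^ 2 * sumSq ψ := by
  simp only [sumSq, Pi.smul_apply, smul_eq_mul, mul_pow, mul_sum]

theorem contDiff_sumSq {n : WithTop ℕ∞} : ContDiff ℝ n (sumSq : (ι → κ → μ → ℝ) → ℝ) := by
  unfold sumSq
  fun_prop

end Tensor

section Potential

variable {N : ℕ} {l2 ld lp lt a1 a2 a3 : ℝ}

noncomputable def quarticPart (N : ℕ) (ld lp lt a1 a2 a3 : ℝ) (ψ : Fin N → Fin N → Fin N → ℝ) :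
    ℝ :=
  ld / (4 * (N : ℝ) ^ 3) * sumSq ψ ^ 2
  + lp / (4 * (N : ℝ) ^ 2) *
      (a1 * pillow₁ ψ ψ ψ ψ + a2 * pillow₂ ψ ψ ψ ψ + a3 * pillow₃ ψ ψ ψ ψ)
  + lt / (4 * (N : ℝ) ^ ((3 : ℝ) / 2)) * tetrahedron ψ ψ ψ ψ

theorem potV_eq : potV N l2 ld lp lt a1 a2 a3
    = fun ψ => l2 / 2 * sumSq ψ + quarticPart N ld lp lt a1 a2 a3 ψ := by
  funext ψ
  simp only [potV, quarticPart, sumSq, pillow₁, pillow₂, pillow₃, tetrahedron]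
  ring

theorem quarticPart_smul (r : ℝ) (ψ : Fin N → Fin N → Fin N → ℝ) :
    quarticPart N ld lp lt a1 a2 a3 (r • ψ) = r ^ 4 * quarticPart N ld lp lt a1 a2 a3 ψ := by
  have h (α β γ δ : ℝ) : r * α * (r * β) * (r * γ) * (r * δ) = r ^ 4 * (α * β * γ * δ) := by ring
  simp only [quarticPart, sumSq_smul, pillow₁, pillow₂, pillow₃, tetrahedron, Pi.smul_apply,
    smul_eq_mul, h, ← mul_sum]
  ring

theorem contDiff_quarticPart {n : WithTop ℕ∞} :
    ContDiff ℝ n (quarticPart N ld lp lt a1 a2 a3) := by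
  unfold quarticPart sumSq pillow₁ pillow₂ pillow₃ tetrahedron
  fun_prop

theorem hasLineDerivAt_quarticPart_tensor3 (u v w p q r : Fin N → ℝ) :
    HasLineDerivAt ℝ (quarticPart N ld lp lt a1 a2 a3)
      ((ld / (N : ℝ) ^ 3 + lp / (N : ℝ) ^ 2 * (a1 + a2 + a3) + lt / (N : ℝ) ^ ((3 : ℝ) / 2))
        * ((u ⬝ᵥ u) * (v ⬝ᵥ v) * (w ⬝ᵥ w)) * ((u ⬝ᵥ p) * (v ⬝ᵥ q) * (w ⬝ᵥ r)))
      (tensor3 u v w) (tensor3 p q r) := by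
  set x := tensor3 u v w
  set y := tensor3 p q r
  unfold HasLineDerivAt quarticPart
  have hpillows := (((hasLineDerivAt_pillow₁ x y).const_mul a1).add
    ((hasLineDerivAt_pillow₂ x y).const_mul a2)).add ((hasLineDerivAt_pillow₃ x y).const_mul a3)
  refine ((((HasDerivAt.pow (hasLineDerivAt_sumSq x y) 2).const_mul _).add
    (hpillows.const_mul _)).add ((hasLineDerivAt_tetrahedron x y).const_mul _)).congr_deriv ?_
  simp only [x, y, zero_smul, add_zero, sumSq_tensor3, sum_tensor3_mul_tensor3, pillow₁_tensor3,
    pillow₂_tensor3, pillow₃_tensor3, tetrahedron_tensor3, dotProduct_comm p, dotProduct_comm q,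
    dotProduct_comm r]
  ring

theorem hasLineDerivAt_lineDeriv_potV (x y : Fin N → Fin N → Fin N → ℝ) :
    HasLineDerivAt ℝ (fun ψ => lineDeriv ℝ (potV N l2 ld lp lt a1 a2 a3) ψ x)
      (l2 * ∑ a, ∑ b, ∑ c, x a b c * y a b c
        + 3 * lineDeriv ℝ (quarticPart N ld lp lt a1 a2 a3) x y) x y := by
  set P₂ : (Fin N → Fin N → Fin N → ℝ) → ℝ := fun ψ => l2 / 2 * sumSq ψ
  set P₄ := quarticPart N ld lp lt a1 a2 a3
  have hP₂ : ContDiff ℝ 2 P₂ := contDiff_const.mul contDiff_sumSq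
  have hP₄ : ContDiff ℝ 2 P₄ := contDiff_quarticPart
  have hsplit (ψ : Fin N → Fin N → Fin N → ℝ) :
      lineDeriv ℝ (potV N l2 ld lp lt a1 a2 a3) ψ x
        = lineDeriv ℝ P₂ ψ x + lineDeriv ℝ P₄ ψ x := by
    rw [potV_eq]
    exact HasLineDerivAt.lineDeriv (HasDerivAt.add
      ((hP₂.differentiable two_ne_zero ψ).lineDifferentiableAt.hasLineDerivAt)
      ((hP₄.differentiable two_ne_zero ψ).lineDifferentiableAt.hasLineDerivAt))
  have h₂ := hasLineDerivAt_lineDeriv_of_homogeneous (n := 2)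
    (fun r ψ => by simp only [P₂, sumSq_smul]; ring) hP₂ x y
  have h₄ := hasLineDerivAt_lineDeriv_of_homogeneous (n := 4) quarticPart_smul hP₄ x y
  simp only [hsplit]
  refine (HasDerivAt.add h₂ h₄).congr_deriv ?_
  have hq : HasLineDerivAt ℝ P₂ (l2 / 2 * (2 * ∑ a, ∑ b, ∑ c, x a b c * y a b c)) x y :=
    (hasLineDerivAt_sumSq x y).const_mul (l2 / 2)
  rw [hq.lineDeriv]
  push_cast
  ring

end Potential

theorem hessApply_eq_lineDeriv (N : ℕ) (l2 ld lp lt a1 a2 a3 : ℝ)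
    (φ χ : Fin N → Fin N → Fin N → ℝ) (a b c : Fin N) :
    hessApply N l2 ld lp lt a1 a2 a3 φ χ a b c
      = lineDeriv ℝ (fun ψ => lineDeriv ℝ (potV N l2 ld lp lt a1 a2 a3) ψ χ) φ
          (tensor3 (Pi.single a 1) (Pi.single b 1) (Pi.single c 1)) := by
  simp only [hessApply, lineDeriv]
  congr! with s t a' b' c'
  simp only [tensor3, Pi.add_apply, Pi.smul_apply, smul_eq_mul, Pi.single_apply, ite_and]
  split_ifs <;> ring

/-- At a rank-one solution `φ = u ⊗ v ⊗ w`, the Hessian of `V` in the direction of the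
solution itself satisfies `H(φ)(u⊗v⊗w) = -2λ₂ (u⊗v⊗w)`. -/
theorem rank_one_radial_mode (N : ℕ) (hN : 1 ≤ N)
    (l2 ld lp lt a1 a2 a3 : ℝ)
    (u v w : Fin N → ℝ)
    (φ : Fin N → Fin N → Fin N → ℝ) (hφ : φ = fun a b c => u a * v b * w c)
    (D : ℝ)
    (hD : D = ld + lp * (N : ℝ) * (a1 + a2 + a3) + lt * (N : ℝ) ^ ((3 : ℝ) / 2))
    (hsol : l2 + D / (N : ℝ) ^ 3 *
      ((∑ a, (u a) ^ 2) * (∑ b, (v b) ^ 2) * (∑ c, (w c) ^ 2)) = 0) :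
    hessApply N l2 ld lp lt a1 a2 a3 φ (fun a b c => u a * v b * w c)
      = fun a b c => -2 * l2 * (u a * v b * w c) := by
  have hN₀ : (0 : ℝ) < N := by exact_mod_cast hN
  have hcoupling : ld / (N : ℝ) ^ 3 + lp / (N : ℝ) ^ 2 * (a1 + a2 + a3)
      + lt / (N : ℝ) ^ ((3 : ℝ) / 2) = D / (N : ℝ) ^ 3 := by
    have h32 : (N : ℝ) ^ ((3 : ℝ) / 2) * (N : ℝ) ^ ((3 : ℝ) / 2) = (N : ℝ) ^ 3 := by
      rw [← Real.rpow_add hN₀]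
      norm_num
    rw [hD]
    field_simp
    linear_combination -lt * h32
  subst hφ
  funext a b c
  show hessApply N l2 ld lp lt a1 a2 a3 (tensor3 u v w) (tensor3 u v w) a b c
    = -2 * l2 * tensor3 u v w a b c
  rw [hessApply_eq_lineDeriv, (hasLineDerivAt_lineDeriv_potV _ _).lineDeriv,
    (hasLineDerivAt_quarticPart_tensor3 u v w _ _ _).lineDeriv, sum_tensor3_mul_tensor3,
    hcoupling]
  simp only [dotProduct_single, mul_one]
  simp only [tensor3, dotProduct, ← sq]
  linear_combination (3 * (u a * v b * w c)) * hsol
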